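/- arXiv:2007.10429 — 8 statements merged into one kernel-verified Lean document; each statement's English description precedes it below -/
import Mathlib

section
/- Let G be a group and let a, b, c be elements of G satisfying the braid relation b*c*b = c*b*c and the cycle relation b*a*c*b = c*b*a*c. Then a*c*b*c⁻¹*a⁻¹*c = c*b. -/
/-- From the braid relation `b*c*b = c*b*c` and the cycle relation
`b*a*c*b = c*b*a*c` one deduces `a*c*b*c⁻¹*a⁻¹*c = c*b`. -/
theorem key_identity {G : Type*} [Group G] (a b c : G)
    (hbc : b * c * b = c * b * c)
    (hcyc : b * a * c * b = c * b * a * c) :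
    a * c * b * c⁻¹ * a⁻¹ * c = c * b := by
  have h1 : a * c * b * c⁻¹ * a⁻¹ * c = b⁻¹ * (b * a * c * b * c⁻¹) * a⁻¹ * c := by
    group
  rw [hcyc] at h1
  have h2 : b⁻¹ * (c * b * a * c * c⁻¹) * a⁻¹ * c = b⁻¹ * (c * b * c) := by
    group
  rw [← hbc] at h2
  rw [h1, h2]
  group
end

section
/- Let G be a group and let a, b, c be elements of G satisfying the braid relation b*c*b = c*b*c and the cycle relation b*a*c*b = c*b*a*c. Set y = a⁻¹*b*a and z = b⁻¹*c*b. Then y and z satisfy the braid relation y*z*y = z*y*z. -/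
/-- From the braid relation `b*c*b = c*b*c` and the cycle relation
`b*a*c*b = c*b*a*c`, the elements `y = a⁻¹*b*a` and `z = b⁻¹*c*b`
satisfy the braid relation. -/
theorem braid_yz {G : Type*} [Group G] (a b c : G)
    (hbc : b * c * b = c * b * c)
    (hcyc : b * a * c * b = c * b * a * c) :
    (a⁻¹ * b * a) * (b⁻¹ * c * b) * (a⁻¹ * b * a)
      = (b⁻¹ * c * b) * (a⁻¹ * b * a) * (b⁻¹ * c * b) := by
  have hz : b⁻¹ * c * b = c * b * c⁻¹ := by
    calc b⁻¹ * c * b = b⁻¹ * (c * b * c) * c⁻¹ := by group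
      _ = b⁻¹ * (b * c * b) * c⁻¹ := by rw [← hbc]
      _ = c * b * c⁻¹ := by group
  have hcomm : a * (c * b * c⁻¹) = (c * b * c⁻¹) * a := by
    calc a * (c * b * c⁻¹) = b⁻¹ * (b * a * c * b) * c⁻¹ := by group
      _ = b⁻¹ * (c * b * a * c) * c⁻¹ := by rw [hcyc]
      _ = b⁻¹ * c * b * a := by group
      _ = (c * b * c⁻¹) * a := by rw [hz]
  have hcomm' : (c * b * c⁻¹) * a⁻¹ = a⁻¹ * (c * b * c⁻¹) := by
    calc (c * b * c⁻¹) * a⁻¹ = a⁻¹ * (a * (c * b * c⁻¹)) * a⁻¹ := by group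
      _ = a⁻¹ * ((c * b * c⁻¹) * a) * a⁻¹ := by rw [hcomm]
      _ = a⁻¹ * (c * b * c⁻¹) := by group
  rw [hz]
  calc (a⁻¹ * b * a) * (c * b * c⁻¹) * (a⁻¹ * b * a)
      = a⁻¹ * b * (a * (c * b * c⁻¹) * a⁻¹) * b * a := by group
    _ = a⁻¹ * b * ((c * b * c⁻¹) * a * a⁻¹) * b * a := by rw [hcomm]
    _ = a⁻¹ * (b * c * b) * (c⁻¹ * b * a) := by group
    _ = a⁻¹ * (c * b * c) * (c⁻¹ * b * a) := by rw [hbc]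
    _ = (a⁻¹ * (c * b * c⁻¹)) * (c * b * a) := by group
    _ = ((c * b * c⁻¹) * a⁻¹) * (c * b * a) := by rw [← hcomm']
    _ = (c * b * c⁻¹) * a⁻¹ * (b * c * b) * (c⁻¹ * a) := by
        rw [hbc]; group
    _ = (c * b * c⁻¹) * (a⁻¹ * b) * (a * (c * b * c⁻¹)) := by
        rw [hcomm]; group
    _ = (c * b * c⁻¹) * (a⁻¹ * b * a) * (c * b * c⁻¹) := by group
end

section
/- Let G be a group and let a, b, c be elements of G satisfying the braid relation b*c*b = c*b*c and the cycle relation b*a*c*b = c*b*a*c. Then a commutes with z = b⁻¹*c*b, i.e. a*(b⁻¹*c*b) = (b⁻¹*c*b)*a. -/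
/-- From the braid relation `b*c*b = c*b*c` and the cycle relation
`b*a*c*b = c*b*a*c`, the element `a` commutes with `z = b⁻¹*c*b`. -/
theorem comm_xz {G : Type*} [Group G] (a b c : G)
    (hbc : b * c * b = c * b * c)
    (hcyc : b * a * c * b = c * b * a * c) :
    a * (b⁻¹ * c * b) = (b⁻¹ * c * b) * a := by
  have hz : b⁻¹ * c * b = c * b * c⁻¹ := by
    have h := congrArg (fun x => b⁻¹ * x * c⁻¹) hbc
    simpa [mul_assoc] using h.symm
  have h2 : a * (c * b) = (c * b * c⁻¹) * (a * c) := by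
    have h := congrArg (fun x => b⁻¹ * x) hcyc
    rw [← hz]
    simpa [mul_assoc] using h
  have h3 := congrArg (fun x => x * c⁻¹) h2
  rw [hz]
  simpa [mul_assoc] using h3
end

section
/- Let G be a group and let σ₁, σ₂, σ₃ be elements of G satisfying σ₁*σ₂*σ₁ = σ₂*σ₁*σ₂, σ₂*σ₃*σ₂ = σ₃*σ₂*σ₃ and σ₁*σ₃ = σ₃*σ₁. Define a = σ₁, b = σ₁*σ₂*σ₁⁻¹ and c = σ₁*σ₂*σ₃*σ₂⁻¹*σ₁⁻¹. Then b*a*c*b = σ₁*σ₁*σ₂*σ₃ = c*b*a*c; in particular a, b, c satisfy the cycle relation b*a*c*b = c*b*a*c. -/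
/-- With the Artin relations for `σ₁, σ₂, σ₃` and `a = σ₁`,
`b = σ₁*σ₂*σ₁⁻¹`, `c = σ₁*σ₂*σ₃*σ₂⁻¹*σ₁⁻¹`, one has
`b*a*c*b = σ₁*σ₁*σ₂*σ₃ = c*b*a*c`; in particular the cycle relation
`b*a*c*b = c*b*a*c` holds. -/
theorem cycle_abc {G : Type*} [Group G] (σ₁ σ₂ σ₃ : G)
    (h12 : σ₁ * σ₂ * σ₁ = σ₂ * σ₁ * σ₂)
    (h23 : σ₂ * σ₃ * σ₂ = σ₃ * σ₂ * σ₃)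
    (h13 : σ₁ * σ₃ = σ₃ * σ₁) :
    (σ₁ * σ₂ * σ₁⁻¹) * σ₁ * (σ₁ * σ₂ * σ₃ * σ₂⁻¹ * σ₁⁻¹) * (σ₁ * σ₂ * σ₁⁻¹)
        = σ₁ * σ₁ * σ₂ * σ₃ ∧
    σ₁ * σ₁ * σ₂ * σ₃
        = (σ₁ * σ₂ * σ₃ * σ₂⁻¹ * σ₁⁻¹) * (σ₁ * σ₂ * σ₁⁻¹) * σ₁ * (σ₁ * σ₂ * σ₃ * σ₂⁻¹ * σ₁⁻¹) ∧
    (σ₁ * σ₂ * σ₁⁻¹) * σ₁ * (σ₁ * σ₂ * σ₃ * σ₂⁻¹ * σ₁⁻¹) * (σ₁ * σ₂ * σ₁⁻¹)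
        = (σ₁ * σ₂ * σ₃ * σ₂⁻¹ * σ₁⁻¹) * (σ₁ * σ₂ * σ₁⁻¹) * σ₁ * (σ₁ * σ₂ * σ₃ * σ₂⁻¹ * σ₁⁻¹) := by
  have h13' : σ₃ * σ₁⁻¹ = σ₁⁻¹ * σ₃ := by
    rw [eq_comm, inv_mul_eq_iff_eq_mul, ← mul_assoc, h13, mul_assoc, mul_inv_cancel, mul_one]
  have e1 : (σ₁ * σ₂ * σ₁⁻¹) * σ₁ * (σ₁ * σ₂ * σ₃ * σ₂⁻¹ * σ₁⁻¹) * (σ₁ * σ₂ * σ₁⁻¹)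
      = σ₁ * σ₁ * σ₂ * σ₃ := by
    simp only [mul_assoc, inv_mul_cancel_left, mul_inv_cancel_left]
    rw [h13']
    simp only [← mul_assoc]
    conv_lhs => rw [mul_assoc σ₁ σ₂ σ₁, mul_assoc σ₁ (σ₂*σ₁) σ₂, ← h12]
    simp only [mul_assoc, inv_mul_cancel_left, mul_inv_cancel_left]
  have e2 : (σ₁ * σ₂ * σ₃ * σ₂⁻¹ * σ₁⁻¹) * (σ₁ * σ₂ * σ₁⁻¹) * σ₁ * (σ₁ * σ₂ * σ₃ * σ₂⁻¹ * σ₁⁻¹)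
      = σ₁ * σ₁ * σ₂ * σ₃ := by
    simp only [mul_assoc, inv_mul_cancel_left, mul_inv_cancel_left]
    simp only [← mul_assoc]
    rw [mul_assoc (σ₁*σ₂) σ₃ σ₁, ← h13, ← mul_assoc]
    rw [mul_assoc (σ₁*σ₂*σ₁) σ₃ σ₂, mul_assoc (σ₁*σ₂*σ₁) (σ₃*σ₂) σ₃, ← h23]
    simp only [mul_assoc, mul_inv_cancel_left]
    rw [h13']
    simp only [← mul_assoc]
    conv_lhs => rw [mul_assoc σ₁ σ₂ σ₁, mul_assoc σ₁ (σ₂*σ₁) σ₂, ← h12]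
    simp only [mul_assoc, inv_mul_cancel_left, mul_inv_cancel_left]
  exact ⟨e1, e2.symm, e1.trans e2.symm⟩
end

section
/- Let F be the free group on three generators A, B, C, and let R ⊆ F consist of the four words (A*B*A)*(B*A*B)⁻¹, (B*C*B)*(C*B*C)⁻¹, (A*C*A)*(C*A*C)⁻¹ and (B*A*C*B)*(C*B*A*C)⁻¹. Let F' be the free group on three generators X, Y, Z, and let S ⊆ F' consist of the three words (X*Y*X)*(Y*X*Y)⁻¹, (Y*Z*Y)*(Z*Y*Z)⁻¹ and (X*Z)*(Z*X)⁻¹. Then the presented group ⟨A,B,C | R⟩ is isomorphic to the presented group ⟨X,Y,Z | S⟩, via an isomorphism sending the class of A to the class of X, the class of B to the class of X*Y*X⁻¹, and the class of C to the class of X*Y*Z*Y⁻¹*X⁻¹. -/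
/-!
The two presentations differ by a change of generators through conjugation: `b = x y x⁻¹` and
`c = (x y) z (x y)⁻¹`, inversely `y = a⁻¹ b a` and `z = (b a)⁻¹ c (b a)`. Conjugation preserves
braid relations, so these transfer directly. The remaining relations correspond because, once
`b c b = c b c`, the cycle relation for `(a, b, c)` is equivalent to `a` commuting with `b⁻¹ c b`,
and under the change of generators `b⁻¹ c b = x z x⁻¹`.
-/

namespace BouquetStmt9

def A : FreeGroup (Fin 3) := FreeGroup.of 0
def B : FreeGroup (Fin 3) := FreeGroup.of 1
def C : FreeGroup (Fin 3) := FreeGroup.of 2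

def R : Set (FreeGroup (Fin 3)) :=
  { (A * B * A) * (B * A * B)⁻¹,
    (B * C * B) * (C * B * C)⁻¹,
    (A * C * A) * (C * A * C)⁻¹,
    (B * A * C * B) * (C * B * A * C)⁻¹ }

def X : FreeGroup (Fin 3) := FreeGroup.of 0
def Y : FreeGroup (Fin 3) := FreeGroup.of 1
def Z : FreeGroup (Fin 3) := FreeGroup.of 2

def S : Set (FreeGroup (Fin 3)) :=
  { (X * Y * X) * (Y * X * Y)⁻¹,
    (Y * Z * Y) * (Z * Y * Z)⁻¹,
    (X * Z) * (Z * X)⁻¹ }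

section Relations

variable {M : Type*} [Mul M]

def BraidRel (x y : M) : Prop := x * y * x = y * x * y

def CycleRel (g h k : M) : Prop := h * g * k * h = k * h * g * k

theorem BraidRel.symm {x y : M} (h : BraidRel x y) : BraidRel y x := Eq.symm h

theorem BraidRel.map {N F : Type*} [Mul N] [FunLike F M N] [MulHomClass F M N] {x y : M}
    (h : BraidRel x y) (f : F) : BraidRel (f x) (f y) := by
  simp only [BraidRel, ← map_mul]
  exact congrArg f h

end Relations

section Conjugation

variable {G : Type*} [Group G] {a b c x y z : G}

theorem BraidRel.conj (h : BraidRel x y) (g : G) : BraidRel (g * x * g⁻¹) (g * y * g⁻¹) := by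
  simpa only [MulAut.conj_apply] using h.map (MulAut.conj g)

theorem BraidRel.inv_mul_mul_eq (h : BraidRel b c) : b⁻¹ * c * b = c * b * c⁻¹ :=
  calc b⁻¹ * c * b = b⁻¹ * (c * b * c) * c⁻¹ := by group
    _ = b⁻¹ * (b * c * b) * c⁻¹ := by rw [← h]
    _ = c * b * c⁻¹ := by group

theorem cycleRel_iff_commute (hbc : BraidRel b c) :
    CycleRel a b c ↔ Commute a (b⁻¹ * c * b) := by
  have lhs : b * (a * (c * b * c⁻¹)) * c = b * a * c * b := by group
  have rhs : b * (b⁻¹ * c * b * a) * c = c * b * a * c := by group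
  rw [CycleRel, ← lhs, ← rhs, mul_left_inj, mul_right_inj, ← hbc.inv_mul_mul_eq]
  rfl

theorem bouquetRels_of_braidRels (hxy : BraidRel x y) (hyz : BraidRel y z) (hxz : Commute x z) :
    BraidRel x (x * y * x⁻¹) ∧ BraidRel (x * y * x⁻¹) (x * y * z * y⁻¹ * x⁻¹) ∧
      BraidRel x (x * y * z * y⁻¹ * x⁻¹) ∧ CycleRel x (x * y * x⁻¹) (x * y * z * y⁻¹ * x⁻¹) := by
  have hbc : BraidRel (x * y * x⁻¹) (x * y * z * y⁻¹ * x⁻¹) := by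
    simpa [mul_assoc] using hyz.conj (x * y)
  refine ⟨by simpa using hxy.conj x, hbc, ?_, ?_⟩
  · have hx : z⁻¹ * x * z = x := by rw [mul_assoc, hxz.eq, inv_mul_cancel_left]
    have hxw : BraidRel x (y * z * y⁻¹) := by
      simpa only [inv_inv, hx, hyz.symm.inv_mul_mul_eq] using hxy.conj z⁻¹
    simpa [mul_assoc] using hxw.conj x
  · have h : (x * y * x⁻¹)⁻¹ * (x * y * z * y⁻¹ * x⁻¹) * (x * y * x⁻¹) = x * z * x⁻¹ := by group
    rw [cycleRel_iff_commute hbc, h]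
    simpa using hxz.conj x

theorem braidRels_of_bouquetRels (hab : BraidRel a b) (hbc : BraidRel b c) (hcyc : CycleRel a b c) :
    BraidRel a (a⁻¹ * b * a) ∧ BraidRel (a⁻¹ * b * a) (a⁻¹ * b⁻¹ * c * b * a) ∧
      Commute a (a⁻¹ * b⁻¹ * c * b * a) := by
  refine ⟨by simpa using hab.conj a⁻¹, by simpa [mul_assoc] using (hbc.conj b⁻¹).conj a⁻¹, ?_⟩
  simpa [mul_assoc] using ((cycleRel_iff_commute hbc).1 hcyc).conj a⁻¹

end Conjugation

theorem _root_.PresentedGroup.lift_of_eq_one_of_mem {α : Type*} {rels : Set (FreeGroup α)} :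
    ∀ r ∈ rels, FreeGroup.lift (PresentedGroup.of (rels := rels)) r = 1 := by
  have h : FreeGroup.lift (PresentedGroup.of (rels := rels)) = PresentedGroup.mk rels :=
    FreeGroup.ext_hom _ _ fun _ => FreeGroup.lift_apply_of
  simpa only [h] using fun _ => PresentedGroup.one_of_mem

section Presentations

variable {G : Type*} [Group G]

theorem forall_lift_R_eq_one_iff (f : Fin 3 → G) :
    (∀ r ∈ R, FreeGroup.lift f r = 1) ↔
      BraidRel (f 0) (f 1) ∧ BraidRel (f 1) (f 2) ∧ BraidRel (f 0) (f 2) ∧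
        CycleRel (f 0) (f 1) (f 2) := by
  simp only [R, A, B, C, Set.mem_insert_iff, Set.mem_singleton_iff, forall_eq_or_imp, forall_eq,
    map_mul, map_inv, FreeGroup.lift_apply_of, mul_inv_eq_one, BraidRel, CycleRel]

theorem forall_lift_S_eq_one_iff (f : Fin 3 → G) :
    (∀ r ∈ S, FreeGroup.lift f r = 1) ↔
      BraidRel (f 0) (f 1) ∧ BraidRel (f 1) (f 2) ∧ Commute (f 0) (f 2) := by
  simp only [S, X, Y, Z, Set.mem_insert_iff, Set.mem_singleton_iff, forall_eq_or_imp, forall_eq,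
    map_mul, map_inv, FreeGroup.lift_apply_of, mul_inv_eq_one, BraidRel, Commute, SemiconjBy]

end Presentations

open PresentedGroup (of)

theorem braidRels_of_generators :
    BraidRel (of 0 : PresentedGroup S) (of 1) ∧ BraidRel (of 1 : PresentedGroup S) (of 2) ∧
      Commute (of 0 : PresentedGroup S) (of 2) :=
  (forall_lift_S_eq_one_iff _).1 PresentedGroup.lift_of_eq_one_of_mem

theorem bouquetRels_of_generators :
    BraidRel (of 0 : PresentedGroup R) (of 1) ∧ BraidRel (of 1 : PresentedGroup R) (of 2) ∧
      BraidRel (of 0 : PresentedGroup R) (of 2) ∧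
        CycleRel (of 0 : PresentedGroup R) (of 1) (of 2) :=
  (forall_lift_R_eq_one_iff _).1 PresentedGroup.lift_of_eq_one_of_mem

def bouquetGens : Fin 3 → PresentedGroup S :=
  ![of 0, of 0 * of 1 * (of 0)⁻¹, of 0 * of 1 * of 2 * (of 1)⁻¹ * (of 0)⁻¹]

def braidGens : Fin 3 → PresentedGroup R :=
  ![of 0, (of 0)⁻¹ * of 1 * of 0, (of 0)⁻¹ * (of 1)⁻¹ * of 2 * of 1 * of 0]

def toBraid : PresentedGroup R →* PresentedGroup S :=
  PresentedGroup.toGroup (f := bouquetGens) <| by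
    obtain ⟨hxy, hyz, hxz⟩ := braidRels_of_generators
    exact (forall_lift_R_eq_one_iff _).2 (bouquetRels_of_braidRels hxy hyz hxz)

def ofBraid : PresentedGroup S →* PresentedGroup R :=
  PresentedGroup.toGroup (f := braidGens) <| by
    obtain ⟨hab, hbc, -, hcyc⟩ := bouquetRels_of_generators
    exact (forall_lift_S_eq_one_iff _).2 (braidRels_of_bouquetRels hab hbc hcyc)

theorem toBraid_of (i : Fin 3) : toBraid (of i) = bouquetGens i :=
  PresentedGroup.toGroup.of _

theorem ofBraid_of (i : Fin 3) : ofBraid (of i) = braidGens i :=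
  PresentedGroup.toGroup.of _

theorem ofBraid_comp_toBraid : ofBraid.comp toBraid = MonoidHom.id _ :=
  PresentedGroup.ext fun i => by
    fin_cases i <;> simp [toBraid_of, ofBraid_of, bouquetGens, braidGens] <;> group

theorem toBraid_comp_ofBraid : toBraid.comp ofBraid = MonoidHom.id _ :=
  PresentedGroup.ext fun i => by
    fin_cases i <;> simp [toBraid_of, ofBraid_of, bouquetGens, braidGens] <;> group

/-- The presented group `⟨A,B,C ∣ R⟩` is isomorphic to Artin's presentation
`⟨X,Y,Z ∣ S⟩` of the braid group `B₄`, via an isomorphism sending `A ↦ X`,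
`B ↦ X*Y*X⁻¹` and `C ↦ X*Y*Z*Y⁻¹*X⁻¹`. -/
theorem bouquet_presentation_iso_braid :
    ∃ e : PresentedGroup R ≃* PresentedGroup S,
      e (PresentedGroup.of 0) = PresentedGroup.of 0 ∧
      e (PresentedGroup.of 1)
        = PresentedGroup.of 0 * PresentedGroup.of 1 * (PresentedGroup.of 0)⁻¹ ∧
      e (PresentedGroup.of 2)
        = PresentedGroup.of 0 * PresentedGroup.of 1 * PresentedGroup.of 2 *
            (PresentedGroup.of 1)⁻¹ * (PresentedGroup.of 0)⁻¹ :=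
  ⟨toBraid.toMulEquiv ofBraid ofBraid_comp_toBraid toBraid_comp_ofBraid,
    toBraid_of 0, toBraid_of 1, toBraid_of 2⟩

end BouquetStmt9
end

section
/- Fix n ≥ 1. Let F be the free group on n generators t₁, …, tₙ, and let R ⊆ F consist of: the words (tᵢ*tⱼ*tᵢ)*(tⱼ*tᵢ*tⱼ)⁻¹ for all 1 ≤ i < j ≤ n, and the words (tⱼ*tᵢ*tₖ*tⱼ)*(tₖ*tⱼ*tᵢ*tₖ)⁻¹ for all 1 ≤ i < j < k ≤ n. Let F' be the free group on n generators x₁, …, xₙ, and let S ⊆ F' consist of: the words (xᵢ*xᵢ₊₁*xᵢ)*(xᵢ₊₁*xᵢ*xᵢ₊₁)⁻¹ for 1 ≤ i ≤ n−1, and the words (xᵢ*xⱼ)*(xⱼ*xᵢ)⁻¹ for all i, j with |i−j| ≥ 2. Then the presented group ⟨t₁,…,tₙ | R⟩ is isomorphic to the presented group ⟨x₁,…,xₙ | S⟩, via an isomorphism sending the class of tᵢ to the class of wᵢ, where w₁ = x₁ and wᵢ₊₁ = wᵢ*xᵢ₊₁*wᵢ⁻¹ for 1 ≤ i ≤ n−1.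 -/
namespace BouquetAux


variable {G : Type*} [Group G]

/-- braid(a, a*b*a⁻¹) from braid(a,b) -/
theorem gl_conj_braid {a b : G} (h : a*b*a = b*a*b) :
    a*(a*b*a⁻¹)*a = (a*b*a⁻¹)*a*(a*b*a⁻¹) := by
  rw [show (a*b*a⁻¹)*a*(a*b*a⁻¹) = a*((b*a*b)*a⁻¹) from by group, ← h]
  group

/-- braid(c, d*z*d⁻¹) from braid(c,d), braid(d,z), [c,z]=1 -/
theorem gl_P1 {c d z : G} (hcd : c*d*c = d*c*d) (hdz : d*z*d = z*d*z) (hcz : c*z = z*c) :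
    c*(d*z*d⁻¹)*c = (d*z*d⁻¹)*c*(d*z*d⁻¹) := by
  have hc : Commute c z := hcz
  have e1 : c*(d*z*d⁻¹)*c = z⁻¹*((d*c*d)*z) := by
    calc c*(d*z*d⁻¹)*c = (c*z⁻¹)*((z*d*z)*(d⁻¹*(d⁻¹*(d*c)))) := by group
      _ = (c*z⁻¹)*((d*z*d)*(d⁻¹*(d⁻¹*(d*c)))) := by rw [← hdz]
      _ = (c*z⁻¹)*(d*(z*c)) := by group
      _ = (c*z⁻¹)*(d*(c*z)) := by rw [← hcz]
      _ = (z⁻¹*c)*(d*(c*z)) := by rw [hc.inv_right.eq]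
      _ = z⁻¹*((c*d*c)*z) := by group
      _ = z⁻¹*((d*c*d)*z) := by rw [hcd]
  have e2 : (d*z*d⁻¹)*c*(d*z*d⁻¹) = z⁻¹*((d*c*d)*z) := by
    calc (d*z*d⁻¹)*c*(d*z*d⁻¹) = z⁻¹*((z*d*z)*(d⁻¹*(c*(d*(z*d⁻¹))))) := by group
      _ = z⁻¹*((d*z*d)*(d⁻¹*(c*(d*(z*d⁻¹))))) := by rw [← hdz]
      _ = z⁻¹*(d*((z*c)*(d*(z*d⁻¹)))) := by group
      _ = z⁻¹*(d*((c*z)*(d*(z*d⁻¹)))) := by rw [← hcz]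
      _ = z⁻¹*(d*(c*((z*d*z)*d⁻¹))) := by group
      _ = z⁻¹*(d*(c*((d*z*d)*d⁻¹))) := by rw [← hdz]
      _ = z⁻¹*((d*c*d)*z) := by group
  rw [e1, e2]

/-- braid(c*z*c⁻¹, y) from [c,y]=1 and braid(z,y) -/
theorem gl_P2 {c z y : G} (hcy : c*y = y*c) (hzy : z*y*z = y*z*y) :
    (c*z*c⁻¹)*y*(c*z*c⁻¹) = y*(c*z*c⁻¹)*y := by
  have hc : Commute c y := hcy
  have e1 : (c*z*c⁻¹)*y*(c*z*c⁻¹) = c*((y*z*y)*c⁻¹) := by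
    calc (c*z*c⁻¹)*y*(c*z*c⁻¹) = c*(z*((c⁻¹*y)*(c*(z*c⁻¹)))) := by group
      _ = c*(z*((y*c⁻¹)*(c*(z*c⁻¹)))) := by rw [hc.inv_left.eq]
      _ = c*((z*y*z)*c⁻¹) := by group
      _ = c*((y*z*y)*c⁻¹) := by rw [hzy]
  have e2 : y*(c*z*c⁻¹)*y = c*((y*z*y)*c⁻¹) := by
    calc y*(c*z*c⁻¹)*y = y*(c*(z*(c⁻¹*y))) := by group
      _ = y*(c*(z*(y*c⁻¹))) := by rw [hc.inv_left.eq]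
      _ = (y*c)*(z*(y*c⁻¹)) := by group
      _ = (c*y)*(z*(y*c⁻¹)) := by rw [← hcy]
      _ = c*((y*z*y)*c⁻¹) := by group
  rw [e1, e2]

/-- the cycle relation for (a, b, b*z*b⁻¹) from braid(b,z) and [a,z]=1 -/
theorem gl_P3 {a b z : G} (hbz : b*z*b = z*b*z) (haz : a*z = z*a) :
    b*a*(b*z*b⁻¹)*b = (b*z*b⁻¹)*b*a*(b*z*b⁻¹) := by
  have e2 : (b*z*b⁻¹)*b*a*(b*z*b⁻¹) = b*(a*(b*z)) := by
    calc (b*z*b⁻¹)*b*a*(b*z*b⁻¹) = b*((z*a)*(b*(z*b⁻¹))) := by group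
      _ = b*((a*z)*(b*(z*b⁻¹))) := by rw [← haz]
      _ = (b*a)*((z*b*z)*b⁻¹) := by group
      _ = (b*a)*((b*z*b)*b⁻¹) := by rw [← hbz]
      _ = b*(a*(b*z)) := by group
  rw [e2]; group

/-- braid(b, b⁻¹*c*b) from braid(b,c) -/
theorem gl_P4 {b c : G} (hbc : b*c*b = c*b*c) :
    b*(b⁻¹*c*b)*b = (b⁻¹*c*b)*b*(b⁻¹*c*b) := by
  rw [show (b⁻¹*c*b)*b*(b⁻¹*c*b) = b⁻¹*((c*b*c)*b) from by group, ← hbc]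
  group

/-- [a, b⁻¹*c*b]=1 from braid(b,c) and the cycle relation -/
theorem gl_P5 {a b c : G} (hbc : b*c*b = c*b*c) (hcyc : b*a*c*b = c*b*a*c) :
    a*(b⁻¹*c*b) = (b⁻¹*c*b)*a := by
  have hconj : b⁻¹*c*b = c*b*c⁻¹ := by
    apply mul_left_cancel (a := b)
    rw [show b*(c*b*c⁻¹) = (b*c*b)*c⁻¹ from by group, hbc]
    group
  apply mul_left_cancel (a := b)
  calc b*(a*(b⁻¹*c*b)) = b*(a*(c*b*c⁻¹)) := by rw [hconj]
    _ = (b*a*c*b)*c⁻¹ := by group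
    _ = (c*b*a*c)*c⁻¹ := by rw [hcyc]
    _ = b*((b⁻¹*c*b)*a) := by group

/-- braid(a⁻¹*b*a, b⁻¹*c*b) -/
theorem gl_P6 {a b c : G} (hab : a*b*a = b*a*b) (hbc : b*c*b = c*b*c)
    (hcyc : b*a*c*b = c*b*a*c) :
    (a⁻¹*b*a)*(b⁻¹*c*b)*(a⁻¹*b*a) = (b⁻¹*c*b)*(a⁻¹*b*a)*(b⁻¹*c*b) := by
  have hYa : a*(b⁻¹*c*b) = (b⁻¹*c*b)*a := gl_P5 hbc hcyc
  have hA : Commute a (b⁻¹*c*b) := hYa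
  have hbYb : b*(b⁻¹*c*b)*b = (b⁻¹*c*b)*b*(b⁻¹*c*b) := gl_P4 hbc
  set Y := b⁻¹*c*b with hY
  have e1 : (a⁻¹*b*a)*Y*(a⁻¹*b*a) = a⁻¹*((Y*b*Y)*a) := by
    calc (a⁻¹*b*a)*Y*(a⁻¹*b*a) = a⁻¹*(b*((a*Y)*(a⁻¹*(b*a)))) := by group
      _ = a⁻¹*(b*((Y*a)*(a⁻¹*(b*a)))) := by rw [hYa]
      _ = a⁻¹*((b*Y*b)*a) := by group
      _ = a⁻¹*((Y*b*Y)*a) := by rw [hbYb]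
  have e2 : Y*(a⁻¹*b*a)*Y = a⁻¹*((Y*b*Y)*a) := by
    calc Y*(a⁻¹*b*a)*Y = (Y*a⁻¹)*(b*(a*Y)) := by group
      _ = (a⁻¹*Y)*(b*(a*Y)) := by rw [hA.inv_left.eq]
      _ = (a⁻¹*Y)*(b*(Y*a)) := by rw [hYa]
      _ = a⁻¹*((Y*b*Y)*a) := by group
  rw [e1, e2]

/-- braid(a, a⁻¹*b*a) from braid(a,b) -/
theorem gl_P7 {a b : G} (hab : a*b*a = b*a*b) :
    a*(a⁻¹*b*a)*a = (a⁻¹*b*a)*a*(a⁻¹*b*a) := by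
  rw [show (a⁻¹*b*a)*a*(a⁻¹*b*a) = a⁻¹*((b*a*b)*a) from by group, ← hab]
  group

/-- conjugation identity used for the recursion step of `W`. -/
theorem gl_P9 {c z y : G} (hcy : c*y = y*c) :
    c*(z*y*z⁻¹)*c⁻¹ = (c*z*c⁻¹)*y*(c*z*c⁻¹)⁻¹ := by
  have hc : Commute c y := hcy
  calc c*(z*y*z⁻¹)*c⁻¹ = c*(z*((y*c⁻¹)*(c*(z⁻¹*c⁻¹)))) := by group
    _ = c*(z*((c⁻¹*y)*(c*(z⁻¹*c⁻¹)))) := by rw [hc.inv_left.eq]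
    _ = (c*z*c⁻¹)*y*(c*z*c⁻¹)⁻¹ := by group


/-- `Wf x a k` is the conjugate `(x_a ⋯ x_{a+k-1}) x_{a+k} (x_a ⋯ x_{a+k-1})⁻¹`. -/
def Wf (x : ℕ → G) : ℕ → ℕ → G
  | a, 0 => x a
  | a, k+1 => x a * Wf x (a+1) k * (x a)⁻¹

section Wlemmas
variable {n : ℕ} {x : ℕ → G}

theorem Wf_comm_left (hb2 : ∀ i j : ℕ, i + 2 ≤ j → Commute (x i) (x j)) (c : ℕ) :
    ∀ (k a : ℕ), c + 2 ≤ a → Commute (x c) (Wf x a k)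
  | 0, a, h => hb2 c a h
  | k+1, a, h => by
    simp only [Wf]
    exact ((hb2 c a h).mul_right (Wf_comm_left hb2 c k (a+1) (by omega))).mul_right
      (hb2 c a h).inv_right

theorem Wf_comm_right (hb2 : ∀ i j : ℕ, i + 2 ≤ j → Commute (x i) (x j)) (c : ℕ) :
    ∀ (k a : ℕ), a + k + 2 ≤ c → Commute (x c) (Wf x a k)
  | 0, a, h => (hb2 a c (by omega)).symm
  | k+1, a, h => by
    simp only [Wf]
    exact (((hb2 a c (by omega)).symm.mul_right
      (Wf_comm_right hb2 c k (a+1) (by omega))).mul_right (hb2 a c (by omega)).symm.inv_right)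

theorem Wf_comm_W (hb2 : ∀ i j : ℕ, i + 2 ≤ j → Commute (x i) (x j)) {a k : ℕ} :
    ∀ (m b : ℕ), a + k + 2 ≤ b → Commute (Wf x a k) (Wf x b m)
  | 0, b, h => ((Wf_comm_right hb2 b k a h).symm)
  | m+1, b, h => by
    simp only [Wf]
    exact ((Wf_comm_right hb2 b k a h).symm.mul_right
      (Wf_comm_W hb2 m (b+1) (by omega))).mul_right (Wf_comm_right hb2 b k a h).symm.inv_right

theorem Wf_braid_x (hb1 : ∀ i : ℕ, i + 1 < n → x i * x (i+1) * x i = x (i+1) * x i * x (i+1))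
    (hb2 : ∀ i j : ℕ, i + 2 ≤ j → Commute (x i) (x j)) :
    ∀ (k a : ℕ), a + 1 + k < n →
      x a * Wf x (a+1) k * x a = Wf x (a+1) k * x a * Wf x (a+1) k
  | 0, a, h => hb1 a (by omega)
  | k+1, a, h => by
    simp only [Wf]
    exact gl_P1 (hb1 a (by omega)) (Wf_braid_x hb1 hb2 k (a+1) (by omega))
      (Wf_comm_left hb2 a k (a+2) (by omega)).eq

theorem Wf_braid_W (hb1 : ∀ i : ℕ, i + 1 < n → x i * x (i+1) * x i = x (i+1) * x i * x (i+1))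
    (hb2 : ∀ i j : ℕ, i + 2 ≤ j → Commute (x i) (x j)) :
    ∀ (k a m : ℕ), a + k + 1 + m < n →
      Wf x a k * Wf x (a+k+1) m * Wf x a k = Wf x (a+k+1) m * Wf x a k * Wf x (a+k+1) m
  | 0, a, m, h => by
    have := Wf_braid_x hb1 hb2 m a (by omega)
    have e : a + 0 + 1 = a + 1 := by omega
    rw [e]
    simpa [Wf] using this
  | k+1, a, m, h => by
    have harith : (a+1) + k + 1 = a + (k+1) + 1 := by omega
    have hzy := Wf_braid_W hb1 hb2 k (a+1) m (by omega)
    rw [harith] at hzy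
    have hcy : Commute (x a) (Wf x (a+(k+1)+1) m) :=
      Wf_comm_left hb2 a m (a+(k+1)+1) (by omega)
    simp only [Wf]
    exact gl_P2 hcy.eq hzy

theorem Wf_step (hb2 : ∀ i j : ℕ, i + 2 ≤ j → Commute (x i) (x j)) :
    ∀ (k a : ℕ), Wf x a (k+1) = Wf x a k * x (a+k+1) * (Wf x a k)⁻¹
  | 0, a => by simp [Wf]
  | k+1, a => by
    have harith : (a+1) + k + 1 = a + (k+1) + 1 := by omega
    have IH := Wf_step hb2 k (a+1)
    rw [harith] at IH
    calc Wf x a (k+2) = x a * Wf x (a+1) (k+1) * (x a)⁻¹ := rfl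
      _ = x a * (Wf x (a+1) k * x (a+(k+1)+1) * (Wf x (a+1) k)⁻¹) * (x a)⁻¹ := by rw [IH]
      _ = (x a * Wf x (a+1) k * (x a)⁻¹) * x (a+(k+1)+1) * (x a * Wf x (a+1) k * (x a)⁻¹)⁻¹ :=
        gl_P9 (hb2 a (a+(k+1)+1) (by omega)).eq
      _ = Wf x a (k+1) * x (a+(k+1)+1) * (Wf x a (k+1))⁻¹ := rfl

theorem Wf_split (hb2 : ∀ i j : ℕ, i + 2 ≤ j → Commute (x i) (x j)) :
    ∀ (m i : ℕ), Wf x 0 (i+m+1) = Wf x 0 i * Wf x (i+1) m * (Wf x 0 i)⁻¹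
  | 0, i => by simpa [Wf] using Wf_step hb2 i 0
  | m+1, i => by
    have h1 := Wf_step hb2 (i+m+1) 0
    rw [show i+(m+1)+1 = (i+m+1)+1 by omega, h1, Wf_split hb2 m i,
      show 0+(i+m+1)+1 = i+m+2 by omega]
    have hcomm : Commute (Wf x 0 i) (x (i+m+2)) :=
      (Wf_comm_right hb2 (i+m+2) i 0 (by omega)).symm
    calc (Wf x 0 i * Wf x (i+1) m * (Wf x 0 i)⁻¹) * x (i+m+2) *
          (Wf x 0 i * Wf x (i+1) m * (Wf x 0 i)⁻¹)⁻¹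
        = Wf x 0 i * (Wf x (i+1) m * x (i+m+2) * (Wf x (i+1) m)⁻¹) * (Wf x 0 i)⁻¹ :=
          (gl_P9 hcomm.eq).symm
      _ = Wf x 0 i * Wf x (i+1) (m+1) * (Wf x 0 i)⁻¹ := by
          rw [Wf_step hb2 m (i+1), show (i+1)+m+1 = i+m+2 by omega]

theorem Wf_braid_main (hb1 : ∀ i : ℕ, i + 1 < n → x i * x (i+1) * x i = x (i+1) * x i * x (i+1))
    (hb2 : ∀ i j : ℕ, i + 2 ≤ j → Commute (x i) (x j)) {p q : ℕ} (hpq : p < q) (hq : q < n) :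
    Wf x 0 p * Wf x 0 q * Wf x 0 p = Wf x 0 q * Wf x 0 p * Wf x 0 q := by
  obtain ⟨m, rfl⟩ : ∃ m, q = p + m + 1 := ⟨q - p - 1, by omega⟩
  rw [Wf_split hb2 m p]
  have hb := Wf_braid_W hb1 hb2 p 0 m (by omega)
  rw [show 0+p+1 = p+1 by omega] at hb
  exact gl_conj_braid hb

theorem Wf_cycle_main (hb1 : ∀ i : ℕ, i + 1 < n → x i * x (i+1) * x i = x (i+1) * x i * x (i+1))
    (hb2 : ∀ i j : ℕ, i + 2 ≤ j → Commute (x i) (x j)) {p q r : ℕ}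
    (hpq : p < q) (hqr : q < r) (hr : r < n) :
    Wf x 0 q * Wf x 0 p * Wf x 0 r * Wf x 0 q =
      Wf x 0 r * Wf x 0 q * Wf x 0 p * Wf x 0 r := by
  obtain ⟨m, rfl⟩ : ∃ m, r = q + m + 1 := ⟨r - q - 1, by omega⟩
  rw [Wf_split hb2 m q]
  have hbz := Wf_braid_W hb1 hb2 q 0 m (by omega)
  rw [show 0+q+1 = q+1 by omega] at hbz
  have haz : Wf x 0 p * Wf x (q+1) m = Wf x (q+1) m * Wf x 0 p :=
    (Wf_comm_W hb2 m (q+1) (by omega)).eq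
  exact gl_P3 hbz haz

end Wlemmas

/-- `vf t m` : the preimages of the Artin generators. -/
def vf (t : ℕ → G) : ℕ → G
  | 0 => t 0
  | m+1 => (t m)⁻¹ * t (m+1) * t m

section vlemmas
variable {n : ℕ} {t : ℕ → G}
  (hr1 : ∀ i j : ℕ, i < j → j < n → t i * t j * t i = t j * t i * t j)
  (hr2 : ∀ i j k : ℕ, i < j → j < k → k < n →
    t j * t i * t k * t j = t k * t j * t i * t k)

include hr1 hr2 in
theorem vf_C {p q r : ℕ} (hpq : p < q) (hqr : q < r) (hrn : r < n) :
    Commute (t p) ((t q)⁻¹ * t r * t q) :=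
  gl_P5 (hr1 q r hqr hrn) (hr2 p q r hpq hqr hrn)

include hr1 hr2 in
theorem vf_braid {i : ℕ} (h : i + 1 < n) :
    vf t i * vf t (i+1) * vf t i = vf t (i+1) * vf t i * vf t (i+1) := by
  match i with
  | 0 =>
    simp only [vf]
    exact gl_P7 (hr1 0 1 one_pos h)
  | m+1 =>
    simp only [vf]
    exact gl_P6 (hr1 m (m+1) (by omega) (by omega)) (hr1 (m+1) (m+2) (by omega) (by omega))
      (hr2 m (m+1) (m+2) (by omega) (by omega) (by omega))

include hr1 hr2 in
theorem vf_comm {i j : ℕ} (hij : i + 2 ≤ j) (hj : j < n) :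
    Commute (vf t i) (vf t j) := by
  obtain ⟨jm, rfl⟩ : ∃ jm, j = jm + 1 := ⟨j - 1, by omega⟩
  match i with
  | 0 =>
    simp only [vf]
    exact vf_C hr1 hr2 (by omega) (by omega) hj
  | m+1 =>
    simp only [vf]
    exact ((vf_C hr1 hr2 (show m < jm by omega) (by omega) hj).inv_left.mul_left
      (vf_C hr1 hr2 (show m+1 < jm by omega) (by omega) hj)).mul_left
      (vf_C hr1 hr2 (show m < jm by omega) (by omega) hj)

end vlemmas

/-- generators with junk value `1` out of range -/
def gen {n : ℕ} (rels : Set (FreeGroup (Fin n))) (m : ℕ) : PresentedGroup rels :=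
  if h : m < n then PresentedGroup.of ⟨m, h⟩ else 1

theorem gen_lt {n : ℕ} {rels : Set (FreeGroup (Fin n))} {m : ℕ} (h : m < n) :
    gen rels m = PresentedGroup.of ⟨m, h⟩ := dif_pos h

theorem gen_ge {n : ℕ} {rels : Set (FreeGroup (Fin n))} {m : ℕ} (h : ¬ m < n) :
    gen rels m = 1 := dif_neg h

theorem rel_mk_one {α : Type*} {rels : Set (FreeGroup α)} {r : FreeGroup α} (h : r ∈ rels) :
    PresentedGroup.mk rels r = 1 :=
  (QuotientGroup.eq_one_iff r).mpr (Subgroup.subset_normalClosure h)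

theorem mk_of {α : Type*} {rels : Set (FreeGroup α)} (a : α) :
    PresentedGroup.mk rels (FreeGroup.of a) = PresentedGroup.of a := rfl


end BouquetAux

open BouquetAux

/-- The group presented by the braid relations `tᵢtⱼtᵢ = tⱼtᵢtⱼ` (for `i < j`)
and the cycle relations `tⱼtᵢtₖtⱼ = tₖtⱼtᵢtₖ` (for `i < j < k`) on `n`
generators is isomorphic to Artin's presentation of the braid group `B_{n+1}`
on `n` generators `x₁, …, xₙ`, via an isomorphism sending the class of `tᵢ`
to the class of `wᵢ`, where `w₁ = x₁` and `wᵢ₊₁ = wᵢ * xᵢ₊₁ * wᵢ⁻¹`. -/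
theorem bouquet_presentation_iso_braid_group (n : ℕ) (hn : 1 ≤ n)
    (R : Set (FreeGroup (Fin n)))
    (hR : R = {r | (∃ i j : Fin n, i < j ∧
        r = (FreeGroup.of i * FreeGroup.of j * FreeGroup.of i) *
              (FreeGroup.of j * FreeGroup.of i * FreeGroup.of j)⁻¹) ∨
      (∃ i j k : Fin n, i < j ∧ j < k ∧
        r = (FreeGroup.of j * FreeGroup.of i * FreeGroup.of k * FreeGroup.of j) *
              (FreeGroup.of k * FreeGroup.of j * FreeGroup.of i * FreeGroup.of k)⁻¹)})
    (S : Set (FreeGroup (Fin n)))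
    (hS : S = {r | (∃ (i : ℕ) (h : i + 1 < n),
        r = (FreeGroup.of ⟨i, Nat.lt_of_succ_lt h⟩ * FreeGroup.of ⟨i + 1, h⟩ *
                FreeGroup.of ⟨i, Nat.lt_of_succ_lt h⟩) *
              (FreeGroup.of ⟨i + 1, h⟩ * FreeGroup.of ⟨i, Nat.lt_of_succ_lt h⟩ *
                FreeGroup.of ⟨i + 1, h⟩)⁻¹) ∨
      (∃ i j : Fin n, ((i : ℕ) + 2 ≤ (j : ℕ) ∨ (j : ℕ) + 2 ≤ (i : ℕ)) ∧
        r = (FreeGroup.of i * FreeGroup.of j) *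
              (FreeGroup.of j * FreeGroup.of i)⁻¹)})
    (w : Fin n → PresentedGroup S)
    (hw0 : ∀ h : 0 < n, w ⟨0, h⟩ = PresentedGroup.of ⟨0, h⟩)
    (hws : ∀ (i : ℕ) (h : i + 1 < n),
      w ⟨i + 1, h⟩ = w ⟨i, Nat.lt_of_succ_lt h⟩ *
        PresentedGroup.of ⟨i + 1, h⟩ * (w ⟨i, Nat.lt_of_succ_lt h⟩)⁻¹) :
    ∃ e : PresentedGroup R ≃* PresentedGroup S,
      ∀ i : Fin n, e (PresentedGroup.of i) = w i := by
  -- the braid relations in `PresentedGroup S`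
  have hb1 : ∀ i : ℕ, i + 1 < n →
      gen S i * gen S (i+1) * gen S i = gen S (i+1) * gen S i * gen S (i+1) := by
    intro i h
    have hmem : ((FreeGroup.of (⟨i, Nat.lt_of_succ_lt h⟩ : Fin n) * FreeGroup.of ⟨i+1, h⟩ *
          FreeGroup.of ⟨i, Nat.lt_of_succ_lt h⟩) *
        (FreeGroup.of ⟨i+1, h⟩ * FreeGroup.of ⟨i, Nat.lt_of_succ_lt h⟩ *
          FreeGroup.of ⟨i+1, h⟩)⁻¹) ∈ S := by
      rw [hS]; exact Or.inl ⟨i, h, rfl⟩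
    have h1 := rel_mk_one hmem
    simp only [map_mul, map_inv, mk_of, mul_inv_eq_one] at h1
    rw [gen_lt (Nat.lt_of_succ_lt h), gen_lt h]
    exact h1
  have hb2 : ∀ i j : ℕ, i + 2 ≤ j → Commute (gen S i) (gen S j) := by
    intro i j hij
    by_cases hj : j < n
    · have hi : i < n := by omega
      have hmem : ((FreeGroup.of (⟨i, hi⟩ : Fin n) * FreeGroup.of ⟨j, hj⟩) *
          (FreeGroup.of ⟨j, hj⟩ * FreeGroup.of ⟨i, hi⟩)⁻¹) ∈ S := by
        rw [hS]; exact Or.inr ⟨⟨i, hi⟩, ⟨j, hj⟩, Or.inl hij, rfl⟩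
      have h1 := rel_mk_one hmem
      simp only [map_mul, map_inv, mk_of, mul_inv_eq_one] at h1
      rw [gen_lt hi, gen_lt hj]
      exact h1
    · rw [gen_ge hj]; exact Commute.one_right _
  -- the relations in `PresentedGroup R`
  have hr1 : ∀ i j : ℕ, i < j → j < n → gen R i * gen R j * gen R i
      = gen R j * gen R i * gen R j := by
    intro i j hij hj
    have hi : i < n := by omega
    have hmem : ((FreeGroup.of (⟨i, hi⟩ : Fin n) * FreeGroup.of ⟨j, hj⟩ *
          FreeGroup.of ⟨i, hi⟩) *
        (FreeGroup.of ⟨j, hj⟩ * FreeGroup.of ⟨i, hi⟩ * FreeGroup.of ⟨j, hj⟩)⁻¹) ∈ R := by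
      rw [hR]; exact Or.inl ⟨⟨i, hi⟩, ⟨j, hj⟩, hij, rfl⟩
    have h1 := rel_mk_one hmem
    simp only [map_mul, map_inv, mk_of, mul_inv_eq_one] at h1
    rw [gen_lt hi, gen_lt hj]
    exact h1
  have hr2 : ∀ i j k : ℕ, i < j → j < k → k < n →
      gen R j * gen R i * gen R k * gen R j = gen R k * gen R j * gen R i * gen R k := by
    intro i j k hij hjk hk
    have hj : j < n := by omega
    have hi : i < n := by omega
    have hmem : ((FreeGroup.of (⟨j, hj⟩ : Fin n) * FreeGroup.of ⟨i, hi⟩ *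
          FreeGroup.of ⟨k, hk⟩ * FreeGroup.of ⟨j, hj⟩) *
        (FreeGroup.of ⟨k, hk⟩ * FreeGroup.of ⟨j, hj⟩ * FreeGroup.of ⟨i, hi⟩ *
          FreeGroup.of ⟨k, hk⟩)⁻¹) ∈ R := by
      rw [hR]; exact Or.inr ⟨⟨i, hi⟩, ⟨j, hj⟩, ⟨k, hk⟩, hij, hjk, rfl⟩
    have h1 := rel_mk_one hmem
    simp only [map_mul, map_inv, mk_of, mul_inv_eq_one] at h1
    rw [gen_lt hi, gen_lt hj, gen_lt hk]
    exact h1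
  -- identification of `w` with `Wf`
  have w_eq : ∀ (m : ℕ) (h : m < n), w ⟨m, h⟩ = Wf (gen S) 0 m := by
    intro m
    induction m with
    | zero => intro h; rw [hw0 h]; exact (gen_lt h).symm
    | succ m IH =>
      intro h
      rw [hws m h, IH (Nat.lt_of_succ_lt h), Wf_step hb2 m 0,
        show (0:ℕ)+m+1 = m+1 by omega, gen_lt h]
  have w_eq' : ∀ i : Fin n, w i = Wf (gen S) 0 i.1 := by
    intro i
    have := w_eq i.1 i.2
    simpa using this
  -- the forward homomorphism
  have hrel₁ : ∀ r ∈ R, FreeGroup.lift w r = 1 := by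
    intro r hr'
    rw [hR] at hr'
    rcases hr' with ⟨i, j, hij, rfl⟩ | ⟨i, j, k, hij, hjk, rfl⟩
    · simp only [map_mul, map_inv, FreeGroup.lift_apply_of, mul_inv_eq_one]
      rw [w_eq' i, w_eq' j]
      exact Wf_braid_main hb1 hb2 (Fin.lt_def.mp hij) j.2
    · simp only [map_mul, map_inv, FreeGroup.lift_apply_of, mul_inv_eq_one]
      rw [w_eq' i, w_eq' j, w_eq' k]
      exact Wf_cycle_main hb1 hb2 (Fin.lt_def.mp hij) (Fin.lt_def.mp hjk) k.2
  let φ : PresentedGroup R →* PresentedGroup S := PresentedGroup.toGroup hrel₁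
  -- the backward homomorphism
  have hrel₂ : ∀ r ∈ S, FreeGroup.lift (fun i : Fin n => vf (gen R) i.1) r = 1 := by
    intro r hr'
    rw [hS] at hr'
    rcases hr' with ⟨i, h, rfl⟩ | ⟨i, j, hgap, rfl⟩
    · simp only [map_mul, map_inv, FreeGroup.lift_apply_of, mul_inv_eq_one]
      exact vf_braid hr1 hr2 h
    · simp only [map_mul, map_inv, FreeGroup.lift_apply_of, mul_inv_eq_one]
      rcases hgap with hgap | hgap
      · exact (vf_comm hr1 hr2 hgap j.2).eq
      · exact ((vf_comm hr1 hr2 hgap i.2).symm).eq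
  let ψ : PresentedGroup S →* PresentedGroup R := PresentedGroup.toGroup hrel₂
  have hφ_of : ∀ i : Fin n, φ (PresentedGroup.of i) = w i := fun i =>
    PresentedGroup.toGroup.of hrel₁
  have hψ_of : ∀ i : Fin n, ψ (PresentedGroup.of i) = vf (gen R) i.1 := fun i =>
    PresentedGroup.toGroup.of hrel₂
  -- ψ ∘ φ = id on generators
  have hψw : ∀ (m : ℕ) (h : m < n), ψ (w ⟨m, h⟩) = gen R m := by
    intro m
    induction m with
    | zero =>
      intro h
      rw [hw0 h, hψ_of ⟨0, h⟩]
      show vf (gen R) 0 = gen R 0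
      rfl
    | succ m IH =>
      intro h
      rw [hws m h]
      simp only [map_mul, map_inv, hψ_of ⟨m+1, h⟩, IH (Nat.lt_of_succ_lt h)]
      show gen R m * ((gen R m)⁻¹ * gen R (m+1) * gen R m) * (gen R m)⁻¹ = gen R (m+1)
      group
  -- φ ∘ ψ = id on generators
  have hφv : ∀ (m : ℕ), m < n → φ (vf (gen R) m) = gen S m := by
    intro m
    induction m with
    | zero =>
      intro h
      show φ (gen R 0) = gen S 0
      rw [gen_lt h, hφ_of ⟨0, h⟩, hw0 h, gen_lt h]
    | succ m IH =>
      intro h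
      have hm : m < n := Nat.lt_of_succ_lt h
      show φ ((gen R m)⁻¹ * gen R (m+1) * gen R m) = gen S (m+1)
      rw [map_mul, map_mul, map_inv, gen_lt hm, gen_lt h, hφ_of, hφ_of,
        hws m h, gen_lt h]
      have : w ⟨m, hm⟩ = w ⟨m, Nat.lt_of_succ_lt h⟩ := rfl
      rw [this]
      group
  have hcomp1 : ψ.comp φ = MonoidHom.id (PresentedGroup R) := by
    ext i
    simp only [MonoidHom.comp_apply, MonoidHom.id_apply, hφ_of]
    have := hψw i.1 i.2
    simp only [Fin.eta] at this
    rw [this, gen_lt i.2]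
  have hcomp2 : φ.comp ψ = MonoidHom.id (PresentedGroup S) := by
    ext i
    simp only [MonoidHom.comp_apply, MonoidHom.id_apply, hψ_of]
    rw [hφv i.1 i.2, gen_lt i.2]
  exact ⟨MonoidHom.toMulEquiv φ ψ hcomp1 hcomp2, fun i => hφ_of i⟩
end

section
/- Fix n ≥ 1. Let G be a group and let σ₁, …, σₙ be elements of G satisfying the Artin relations: σᵢ*σᵢ₊₁*σᵢ = σᵢ₊₁*σᵢ*σᵢ₊₁ for 1 ≤ i ≤ n−1, and σᵢ*σⱼ = σⱼ*σᵢ whenever |i−j| ≥ 2. Define w₁ = σ₁ and wᵢ₊₁ = wᵢ*σᵢ₊₁*wᵢ⁻¹ for 1 ≤ i ≤ n−1. Then for all i, j the braid relation wᵢ*wⱼ*wᵢ = wⱼ*wᵢ*wⱼ holds. -/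
private theorem braid_aux1 {G : Type*} [Group G] (a b c : G)
    (h : c * a = a * c) (hb : b * c * b = c * b * c) :
    (a * b * a⁻¹) * c * (a * b * a⁻¹) = c * (a * b * a⁻¹) * c := by
  have h' : c * a⁻¹ = a⁻¹ * c := by
    apply mul_left_cancel (a := a); rw [← mul_assoc, ← h]; group
  calc (a * b * a⁻¹) * c * (a * b * a⁻¹)
      = a * b * (a⁻¹ * c * a) * b * a⁻¹ := by group
    _ = a * (b * c * b) * a⁻¹ := by rw [mul_assoc a⁻¹ c a, h]; group
    _ = a * (c * b * c) * a⁻¹ := by rw [hb]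
    _ = (a * c) * b * (c * a⁻¹) := by group
    _ = c * (a * b * a⁻¹) * c := by rw [← h, h']; group

private theorem braid_aux2 {G : Type*} [Group G] (x y c : G)
    (hxy : x * y * x = y * x * y) (hc : c * x = x * c)
    (hCc : y * c * y = c * y * c) :
    x * (y * c * y⁻¹) * x = (y * c * y⁻¹) * x * (y * c * y⁻¹) := by
  have hc' : c * x⁻¹ = x⁻¹ * c := by
    apply mul_left_cancel (a := x); rw [← mul_assoc, ← hc]; group
  have h1 : y⁻¹ * x * y = x * y * x⁻¹ := by
    calc y⁻¹ * x * y = y⁻¹ * (x * y * x) * x⁻¹ := by group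
      _ = y⁻¹ * (y * x * y) * x⁻¹ := by rw [hxy]
      _ = x * y * x⁻¹ := by group
  have h2 : x * y * x⁻¹ * y⁻¹ = y⁻¹ * x := by rw [← h1]; group
  symm
  calc (y * c * y⁻¹) * x * (y * c * y⁻¹)
      = y * c * (y⁻¹ * x * y) * c * y⁻¹ := by group
    _ = y * c * (x * y * x⁻¹) * c * y⁻¹ := by rw [h1]
    _ = y * (c * x) * y * (x⁻¹ * c) * y⁻¹ := by group
    _ = y * (x * c) * y * (c * x⁻¹) * y⁻¹ := by rw [hc, ← hc']
    _ = y * x * (c * y * c) * x⁻¹ * y⁻¹ := by group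
    _ = (y * x * y) * c * (y * x⁻¹ * y⁻¹) := by rw [← hCc]; group
    _ = (x * y * x) * c * (y * x⁻¹ * y⁻¹) := by rw [← hxy]
    _ = x * y * (x * c) * (y * x⁻¹ * y⁻¹) := by group
    _ = x * y * (c * x) * (y * x⁻¹ * y⁻¹) := by rw [hc]
    _ = x * y * c * (x * y * x⁻¹ * y⁻¹) := by group
    _ = x * y * c * (y⁻¹ * x) := by rw [h2]
    _ = x * (y * c * y⁻¹) * x := by group

private theorem braid_aux3 {G : Type*} [Group G] (a b : G)
    (h : a * b * a = b * a * b) :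
    a * (a * b * a⁻¹) * a = (a * b * a⁻¹) * a * (a * b * a⁻¹) := by
  symm
  calc (a * b * a⁻¹) * a * (a * b * a⁻¹)
      = a * (b * a * b) * a⁻¹ := by group
    _ = a * (a * b * a) * a⁻¹ := by rw [← h]
    _ = a * (a * b * a⁻¹) * a := by group

/-- If `σ₁, …, σₙ` satisfy the Artin relations and `w₁ = σ₁`,
`wᵢ₊₁ = wᵢ * σᵢ₊₁ * wᵢ⁻¹` for `1 ≤ i ≤ n-1`, then all pairs `wᵢ, wⱼ`
satisfy the braid relation. -/
theorem braid_of_chain {G : Type*} [Group G] (n : ℕ) (hn : 1 ≤ n)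
    (σ : ℕ → G)
    (hbraid : ∀ i, 1 ≤ i → i + 1 ≤ n →
      σ i * σ (i + 1) * σ i = σ (i + 1) * σ i * σ (i + 1))
    (hcomm : ∀ i j, 1 ≤ i → 1 ≤ j → i ≤ n → j ≤ n →
      (i + 2 ≤ j ∨ j + 2 ≤ i) → σ i * σ j = σ j * σ i)
    (w : ℕ → G) (hw1 : w 1 = σ 1)
    (hws : ∀ i, 1 ≤ i → i + 1 ≤ n →
      w (i + 1) = w i * σ (i + 1) * (w i)⁻¹) :
    ∀ i j, 1 ≤ i → i ≤ n → 1 ≤ j → j ≤ n →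
      w i * w j * w i = w j * w i * w j := by
  -- w i commutes with σ k for k ≥ i + 2
  have hB : ∀ i, 1 ≤ i → i ≤ n → ∀ k, i + 2 ≤ k → k ≤ n →
      σ k * w i = w i * σ k := by
    intro i hi
    induction i, hi using Nat.le_induction with
    | base =>
      intro _ k hk hkn
      rw [hw1]
      exact hcomm k 1 (by omega) le_rfl hkn hn (Or.inr (by omega))
    | succ i hi ih =>
      intro hin k hk hkn
      rw [hws i hi (by omega)]
      have h1 := ih (by omega) k (by omega) hkn
      have h2 := hcomm k (i + 1) (by omega) (by omega) hkn (by omega)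
        (Or.inr (by omega))
      have h3 : σ k * (w i)⁻¹ = (w i)⁻¹ * σ k := by
        apply mul_left_cancel (a := w i); rw [← mul_assoc, ← h1]; group
      calc σ k * (w i * σ (i + 1) * (w i)⁻¹)
          = (σ k * w i) * σ (i + 1) * (w i)⁻¹ := by group
        _ = w i * (σ k * σ (i + 1)) * (w i)⁻¹ := by rw [h1]; group
        _ = w i * σ (i + 1) * (σ k * (w i)⁻¹) := by rw [h2]; group
        _ = w i * σ (i + 1) * (w i)⁻¹ * σ k := by rw [h3]; group
  -- w i braids with σ (i+1)
  have hC : ∀ i, 1 ≤ i → i + 1 ≤ n →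
      w i * σ (i + 1) * w i = σ (i + 1) * w i * σ (i + 1) := by
    intro i hi
    induction i, hi using Nat.le_induction with
    | base => intro h2; rw [hw1]; exact hbraid 1 le_rfl h2
    | succ i hi _ =>
      intro h2
      rw [hws i hi (by omega)]
      exact braid_aux1 (w i) (σ (i + 1)) (σ (i + 2))
        (hB i hi (by omega) (i + 2) le_rfl (by omega))
        (hbraid (i + 1) (by omega) (by omega))
  -- main claim for i ≤ j
  have hM : ∀ i, 1 ≤ i → ∀ j, i ≤ j → j ≤ n →
      w i * w j * w i = w j * w i * w j := by
    intro i hi j hij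
    induction j, hij using Nat.le_induction with
    | base => intro _; rfl
    | succ j hij ih =>
      intro hjn
      rw [hws j (by omega) hjn]
      rcases eq_or_lt_of_le hij with heq | hlt
      · rw [heq]
        exact braid_aux3 (w j) (σ (j + 1)) (hC j (by omega) hjn)
      · exact braid_aux2 (w i) (w j) (σ (j + 1)) (ih (by omega))
          (hB i hi (by omega) (j + 1) (by omega) hjn)
          (hC j (by omega) hjn)
  intro i j hi hin hj hjn
  rcases le_total i j with h | h
  · exact hM i hi j h hjn
  · exact (hM j hj i h hin).symm
end

section
/- Fix n ≥ 1. Let G be a group and let a₁, …, aₙ be elements of G satisfying the braid relation aᵢ*aⱼ*aᵢ = aⱼ*aᵢ*aⱼ for all 1 ≤ i < j ≤ n, and the cycle relation aⱼ*aᵢ*aₖ*aⱼ = aₖ*aⱼ*aᵢ*aₖ for all 1 ≤ i < j < k ≤ n. Define x₁ = a₁ and xᵢ₊₁ = aᵢ⁻¹*aᵢ₊₁*aᵢ for 1 ≤ i ≤ n−1. Then the elements x₁, …, xₙ satisfy the Artin relations: xᵢ*xᵢ₊₁*xᵢ = xᵢ₊₁*xᵢ*xᵢ₊₁ for 1 ≤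 i ≤ n−1, and xᵢ*xⱼ = xⱼ*xᵢ whenever |i−j| ≥ 2. -/
private lemma braid_step {G : Type*} [Group G] (p q r : G)
    (h3 : q * r * q = r * q * r) (h4 : q * p * r * q = r * q * p * r) :
    (p⁻¹ * q * p) * (q⁻¹ * r * q) * (p⁻¹ * q * p)
      = (q⁻¹ * r * q) * (p⁻¹ * q * p) * (q⁻¹ * r * q) :=
  calc (p⁻¹ * q * p) * (q⁻¹ * r * q) * (p⁻¹ * q * p)
    _ = p⁻¹ * q * p * q⁻¹ * (r * q * r) * r⁻¹ * q⁻¹ * q * p⁻¹ * q * p := by group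
    _ = p⁻¹ * q * p * q⁻¹ * (q * r * q) * r⁻¹ * q⁻¹ * q * p⁻¹ * q * p := by rw [← h3]
    _ = p⁻¹ * (q * p * r * q) * q⁻¹ * r⁻¹ * p⁻¹ * p * r * q * r⁻¹ * p⁻¹ * q * p := by group
    _ = p⁻¹ * (r * q * p * r) * q⁻¹ * r⁻¹ * p⁻¹ * p * r * q * r⁻¹ * p⁻¹ * q * p := by rw [h4]
    _ = p⁻¹ * q⁻¹ * (q * r * q) * q * p := by group
    _ = p⁻¹ * q⁻¹ * (r * q * r) * q * p := by rw [h3]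
    _ = p⁻¹ * q⁻¹ * (r * q * p * r) * r⁻¹ * p⁻¹ * q⁻¹ * q * r * q * p := by group
    _ = p⁻¹ * q⁻¹ * (q * p * r * q) * r⁻¹ * p⁻¹ * q⁻¹ * q * r * q * p := by rw [← h4]
    _ = q⁻¹ * (q * r * q) * r⁻¹ * p⁻¹ * r * q * p := by group
    _ = q⁻¹ * (r * q * r) * r⁻¹ * p⁻¹ * r * q * p := by rw [h3]
    _ = q⁻¹ * r * q * p⁻¹ * (r * q * p * r) * r⁻¹ * p⁻¹ * q⁻¹ * q * p := by group
    _ = q⁻¹ * r * q * p⁻¹ * (q * p * r * q) * r⁻¹ * p⁻¹ * q⁻¹ * q * p := by rw [← h4]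
    _ = q⁻¹ * r * q * p⁻¹ * q * p * q⁻¹ * (q * r * q) * r⁻¹ := by group
    _ = q⁻¹ * r * q * p⁻¹ * q * p * q⁻¹ * (r * q * r) * r⁻¹ := by rw [h3]
    _ = (q⁻¹ * r * q) * (p⁻¹ * q * p) * (q⁻¹ * r * q) := by group

private lemma comm_aux {G : Type*} [Group G] (p u v : G)
    (hbr : u * v * u = v * u * v) (hcyc : u * p * v * u = v * u * p * v) :
    p * (u⁻¹ * v * u) = (u⁻¹ * v * u) * p := by
  have hb' : v * u * v⁻¹ = u⁻¹ * v * u :=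
    calc v * u * v⁻¹
      _ = u⁻¹ * (u * v * u) * v⁻¹ := by group
      _ = u⁻¹ * (v * u * v) * v⁻¹ := by rw [hbr]
      _ = u⁻¹ * v * u := by group
  calc p * (u⁻¹ * v * u)
    _ = p * (v * u * v⁻¹) := by rw [hb']
    _ = u⁻¹ * (u * p * v * u) * v⁻¹ := by group
    _ = u⁻¹ * (v * u * p * v) * v⁻¹ := by rw [hcyc]
    _ = (u⁻¹ * v * u) * p := by group

/-- If `a₁, …, aₙ` satisfy the braid relations for all pairs and the cycle
relations for all triples, then `x₁ = a₁`, `xᵢ₊₁ = aᵢ⁻¹ * aᵢ₊₁ * aᵢ`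
satisfy the Artin relations. -/
theorem artin_of_bouquet {G : Type*} [Group G] (n : ℕ) (hn : 1 ≤ n)
    (a : ℕ → G)
    (hbraid : ∀ i j, 1 ≤ i → i < j → j ≤ n →
      a i * a j * a i = a j * a i * a j)
    (hcycle : ∀ i j k, 1 ≤ i → i < j → j < k → k ≤ n →
      a j * a i * a k * a j = a k * a j * a i * a k)
    (x : ℕ → G) (hx1 : x 1 = a 1)
    (hxs : ∀ i, 1 ≤ i → i + 1 ≤ n →
      x (i + 1) = (a i)⁻¹ * a (i + 1) * a i) :
    (∀ i, 1 ≤ i → i + 1 ≤ n →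
      x i * x (i + 1) * x i = x (i + 1) * x i * x (i + 1)) ∧
    (∀ i j, 1 ≤ i → 1 ≤ j → i ≤ n → j ≤ n →
      (i + 2 ≤ j ∨ j + 2 ≤ i) → x i * x j = x j * x i) := by
  have oneside : ∀ i j, 1 ≤ i → i + 2 ≤ j → j ≤ n → x i * x j = x j * x i := by
    intro i j hi hij hjn
    obtain ⟨k, rfl⟩ : ∃ k, j = k + 2 := ⟨j - 2, by omega⟩
    have hXj : x (k + 2) = (a (k + 1))⁻¹ * a (k + 2) * a (k + 1) :=
      hxs (k + 1) (by omega) (by omega)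
    have key : ∀ t, 1 ≤ t → t ≤ k → a t * x (k + 2) = x (k + 2) * a t := by
      intro t ht1 htk
      rw [hXj]
      exact comm_aux (a t) (a (k + 1)) (a (k + 2))
        (hbraid (k + 1) (k + 2) (by omega) (by omega) (by omega))
        (hcycle t (k + 1) (k + 2) (by omega) (by omega) (by omega) (by omega))
    obtain rfl | h2 : i = 1 ∨ 2 ≤ i := by omega
    · rw [hx1]; exact key 1 (by omega) (by omega)
    · obtain ⟨m, rfl⟩ : ∃ m, i = m + 1 := ⟨i - 1, by omega⟩
      have hXi : x (m + 1) = (a m)⁻¹ * a (m + 1) * a m := hxs m (by omega) (by omega)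
      rw [hXi]
      have c1 : Commute (a m) (x (k + 2)) := key m (by omega) (by omega)
      have c2 : Commute (a (m + 1)) (x (k + 2)) := key (m + 1) (by omega) (by omega)
      exact ((c1.inv_left.mul_left c2).mul_left c1).eq
  constructor
  · intro i hi1 hin
    obtain rfl | h2 : i = 1 ∨ 2 ≤ i := by omega
    · have hX2 : x (1 + 1) = (a 1)⁻¹ * a 2 * a 1 := hxs 1 (by omega) (by omega)
      rw [hx1, hX2]
      have hb : a 1 * a 2 * a 1 = a 2 * a 1 * a 2 :=
        hbraid 1 2 (by omega) (by omega) (by omega)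
      calc a 1 * ((a 1)⁻¹ * a 2 * a 1) * a 1
        _ = (a 1)⁻¹ * (a 1 * a 2 * a 1) * a 1 := by group
        _ = (a 1)⁻¹ * (a 2 * a 1 * a 2) * a 1 := by rw [hb]
        _ = ((a 1)⁻¹ * a 2 * a 1) * a 1 * ((a 1)⁻¹ * a 2 * a 1) := by group
    · obtain ⟨m, rfl⟩ : ∃ m, i = m + 2 := ⟨i - 2, by omega⟩
      have hXi : x (m + 2) = (a (m + 1))⁻¹ * a (m + 2) * a (m + 1) :=
        hxs (m + 1) (by omega) (by omega)
      have hXj : x (m + 2 + 1) = (a (m + 2))⁻¹ * a (m + 3) * a (m + 2) :=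
        hxs (m + 2) (by omega) (by omega)
      rw [hXi, hXj]
      exact braid_step (a (m + 1)) (a (m + 2)) (a (m + 3))
        (hbraid (m + 2) (m + 3) (by omega) (by omega) (by omega))
        (hcycle (m + 1) (m + 2) (m + 3) (by omega) (by omega) (by omega) (by omega))
  · intro i j hi hj hin hjn hor
    rcases hor with h | h
    · exact oneside i j hi h hjn
    · exact (oneside j i hj h hin).symm
end
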